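/- Let T be a finite undirected tree with edge cost M : E → ℝ≥0 and ρ > 0. For a root r, define tEMD^ρ_r(p,q) = Σ_{v ≠ r} M(v, parent(v)) · |φ_r(v)|^ρ, where φ_r is the flow in the tree rooted at r. If n₀ and n₁ are adjacent vertices and Σ_v p(v) = Σ_v q(v), then tEMD^ρ_{n₀}(p,q) = tEMD^ρ_{n₁}(p,q). -/

import Mathlib

open SimpleGraph Finset

variable {V : Type} [Fintype V] [DecidableEq V]

/-- Rooting a tree at `r`: the parent of `v` is the second vertex on the unique
path from `v` to `r` (and `r` itself when `v = r`). -/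
noncomputable def treeParent (G : SimpleGraph V) (hG : G.IsTree) (r v : V) : V :=
  (hG.existsUnique_path v r).choose.getVert 1

/-- The children of `v` in the tree rooted at `r`. -/
noncomputable def treeChildren (G : SimpleGraph V) (hG : G.IsTree) (r v : V) : Finset V :=
  Finset.univ.filter fun c => c ≠ r ∧ treeParent G hG r c = v

/-- `φ` is the flow for `p, q` in the tree rooted at `r` if it satisfies the recursion
`φ v = p v − q v + Σ_{c child of v} φ c`. -/
def IsFlow (G : SimpleGraph V) (hG : G.IsTree) (r : V) (p q φ : V → ℝ) : Prop :=
  ∀ v, φ v = p v - q v + ∑ c ∈ treeChildren G hG r v, φ c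

/-- The tree earth mover's distance for the rooting at `r`, edge costs `M`,
exponent `ρ`, and flow `φ`. -/
noncomputable def tEMD (G : SimpleGraph V) (hG : G.IsTree) (M : V → V → ℝ) (ρ : ℝ)
    (r : V) (φ : V → ℝ) : ℝ :=
  ∑ v ∈ Finset.univ.erase r, M v (treeParent G hG r v) * |φ v| ^ ρ

/-! Rooted at `r`, the flow through `v` is the net mass `∑ (p - q)` of the subtree of `v`, the
vertices whose path to `r` passes through `v`. Moving the root across the edge `n₀ n₁` changes
neither the subtree nor the parent of any other vertex, and the subtrees of `n₁` (rooted at `n₀`)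
and of `n₀` (rooted at `n₁`) are complementary, so by mass balance the flow on that edge only
changes sign. -/

namespace SimpleGraph.IsTree

variable {α : Type*} {G : SimpleGraph α} (hG : G.IsTree)

noncomputable def path (u v : α) : G.Walk u v :=
  (hG.existsUnique_path u v).choose

lemma isPath_path (u v : α) : (hG.path u v).IsPath :=
  (hG.existsUnique_path u v).choose_spec.1

lemma eq_path {u v : α} {p : G.Walk u v} (hp : p.IsPath) : p = hG.path u v :=
  (hG.existsUnique_path u v).choose_spec.2 p hp

lemma path_append {u v w : α} (h : w ∈ (hG.path u v).support) :
    (hG.path u w).append (hG.path w v) = hG.path u v := by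
  classical
  rw [← (hG.path u v).take_spec h, ← hG.eq_path ((hG.isPath_path u v).takeUntil h),
    ← hG.eq_path ((hG.isPath_path u v).dropUntil h)]

lemma path_tail (u v : α) : (hG.path u v).tail = hG.path (hG.path u v).snd v :=
  hG.eq_path (hG.isPath_path u v).tail

lemma path_eq_concat_or_eq_concat {a b : α} (hadj : G.Adj a b) (u : α) :
    hG.path u b = (hG.path u a).concat hadj ∨ hG.path u a = (hG.path u b).concat hadj.symm := by
  by_cases ha : a ∈ (hG.path u b).support
  · exact .inl <| hG.isAcyclic.path_concat (hG.isPath_path u a) (hG.isPath_path u b) hadj ha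
  · have hb := hG.isAcyclic.mem_support_of_ne_mem_support_of_adj_of_isPath
      (hG.isPath_path u a) (hG.isPath_path u b) hadj ha
    exact .inr <| hG.isAcyclic.path_concat (hG.isPath_path u b) (hG.isPath_path u a) hadj.symm hb

lemma mem_support_path_iff_notMem_support_path {a b : α} (hadj : G.Adj a b) (u : α) :
    b ∈ (hG.path u a).support ↔ a ∉ (hG.path u b).support :=
  ⟨hG.isAcyclic.ne_mem_support_of_support_of_adj_of_isPath
      (hG.isPath_path u a) (hG.isPath_path u b) hadj,
    hG.isAcyclic.mem_support_of_ne_mem_support_of_adj_of_isPath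
      (hG.isPath_path u a) (hG.isPath_path u b) hadj⟩

lemma mem_support_path_iff_of_adj {a b : α} (hadj : G.Adj a b) {u v : α} (ha : v ≠ a)
    (hb : v ≠ b) : v ∈ (hG.path u a).support ↔ v ∈ (hG.path u b).support := by
  rcases hG.path_eq_concat_or_eq_concat hadj u with h | h <;> simp [h, Walk.support_concat, ha, hb]

lemma snd_path_eq_of_adj {a b : α} (hadj : G.Adj a b) {u : α} (ha : u ≠ a) (hb : u ≠ b) :
    (hG.path u a).snd = (hG.path u b).snd := by
  have snd_concat {x y : α} (hxy : u ≠ x) (h : G.Adj x y) :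
      ((hG.path u x).concat h).snd = (hG.path u x).snd := by
    rw [Walk.concat_eq_append, Walk.snd, Walk.getVert_append', if_pos]
    exact Nat.one_le_iff_ne_zero.2 fun h0 => Walk.not_nil_of_ne hxy (Walk.length_eq_zero_iff.1 h0)
  rcases hG.path_eq_concat_or_eq_concat hadj u with h | h
  · rw [h, snd_concat ha]
  · rw [h, snd_concat hb]

end SimpleGraph.IsTree

section TreeParent

variable {α : Type} {G : SimpleGraph α} {hG : G.IsTree} {r : α}

lemma adj_treeParent {v : α} (hv : v ≠ r) : G.Adj v (treeParent G hG r v) :=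
  Walk.adj_snd (Walk.not_nil_of_ne hv)

lemma treeParent_of_adj {a b : α} (hadj : G.Adj a b) : treeParent G hG a b = a :=
  (hG.isAcyclic.eq_snd_of_adj_start (hG.isPath_path b a) hadj.symm (Walk.end_mem_support _)).symm

lemma notMem_support_path_treeParent {v : α} (hv : v ≠ r) :
    v ∉ (hG.path (treeParent G hG r v) r).support := by
  have hpath := hG.isPath_path v r
  rw [← Walk.cons_tail_eq (hG.path v r) (Walk.not_nil_of_ne hv), Walk.cons_isPath_iff,
    hG.path_tail] at hpath
  exact hpath.2

lemma treeParent_mem_support_path (r v : α) : treeParent G hG r v ∈ (hG.path v r).support :=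
  Walk.getVert_mem_support _ _

lemma treeParent_eq_of_adj {a b : α} (hadj : G.Adj a b) {v : α} (ha : v ≠ a) (hb : v ≠ b) :
    treeParent G hG a v = treeParent G hG b v :=
  hG.snd_path_eq_of_adj hadj ha hb

end TreeParent

noncomputable def subtree (G : SimpleGraph V) (hG : G.IsTree) (r v : V) : Finset V :=
  Finset.univ.filter fun u => v ∈ (hG.path u r).support

section Rooted

variable {G : SimpleGraph V} {hG : G.IsTree} {r : V}

lemma mem_subtree {v u : V} : u ∈ subtree G hG r v ↔ v ∈ (hG.path u r).support := by
  simp [subtree]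

lemma self_mem_subtree (r v : V) : v ∈ subtree G hG r v :=
  mem_subtree.2 (Walk.start_mem_support _)

lemma subtree_subset_of_mem_support {v w : V} (h : w ∈ (hG.path v r).support) :
    subtree G hG r v ⊆ subtree G hG r w := by
  intro u hu
  rw [mem_subtree, ← hG.path_append (mem_subtree.1 hu), Walk.mem_support_append_iff]
  exact .inr h

lemma mem_support_path_of_mem_subtree_child {v c u : V} (hc : c ∈ treeChildren G hG r v)
    (hu : u ∈ subtree G hG r c) : c ∈ (hG.path u v).support := by
  obtain ⟨hcr, rfl⟩ := (Finset.mem_filter.1 hc).2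
  have hv := subtree_subset_of_mem_support (treeParent_mem_support_path r c) hu
  have hcu := mem_subtree.1 hu
  rw [← hG.path_append (mem_subtree.1 hv), Walk.mem_support_append_iff] at hcu
  exact hcu.resolve_right (notMem_support_path_treeParent hcr)

lemma penultimate_path_of_mem_subtree_child {v c u : V} (hc : c ∈ treeChildren G hG r v)
    (hu : u ∈ subtree G hG r c) : (hG.path u v).penultimate = c := by
  obtain ⟨hcr, hcv⟩ := (Finset.mem_filter.1 hc).2
  have hadj : G.Adj v c := hcv ▸ (adj_treeParent hcr).symm
  exact (hG.isAcyclic.eq_penultimate_of_adj_end (hG.isPath_path u v) hadj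
    (mem_support_path_of_mem_subtree_child hc hu)).symm

lemma ne_of_mem_subtree_child {v c u : V} (hc : c ∈ treeChildren G hG r v)
    (hu : u ∈ subtree G hG r c) : u ≠ v := by
  rintro rfl
  have hcu := mem_support_path_of_mem_subtree_child hc hu
  rw [← hG.eq_path Walk.IsPath.nil, Walk.support_nil, List.mem_singleton] at hcu
  obtain ⟨hcr, rfl⟩ := (Finset.mem_filter.1 hc).2
  exact (adj_treeParent hcr).ne hcu

lemma exists_mem_treeChildren_of_mem_subtree {v u : V} (hu : u ∈ subtree G hG r v)
    (huv : u ≠ v) : ∃ c ∈ treeChildren G hG r v, u ∈ subtree G hG r c := by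
  set p := hG.path u v
  have hp : ¬p.Nil := Walk.not_nil_of_ne huv
  set c := p.penultimate
  have hadj : G.Adj c v := p.adj_penultimate hp
  have hsplit : hG.path u r = p.dropLast.append (Walk.cons hadj (hG.path v r)) := by
    rw [← Walk.concat_append, Walk.concat_dropLast, hG.path_append (mem_subtree.1 hu)]
  have hcr : Walk.cons hadj (hG.path v r) = hG.path c r :=
    hG.eq_path (hsplit ▸ hG.isPath_path u r).of_append_right
  have hc_ne_r : c ≠ r := by
    have hcons := hG.isPath_path c r
    rw [← hcr, Walk.cons_isPath_iff] at hcons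
    rintro rfl
    exact hcons.2 (Walk.end_mem_support _)
  refine ⟨c, Finset.mem_filter.2 ⟨Finset.mem_univ _, hc_ne_r, ?_⟩, ?_⟩
  · change (hG.path c r).snd = v
    rw [← hcr, Walk.snd_cons]
  · rw [mem_subtree, hsplit, Walk.mem_support_append_iff]
    exact .inl (Walk.end_mem_support _)

lemma subtree_erase_eq_biUnion (r v : V) :
    (subtree G hG r v).erase v = (treeChildren G hG r v).biUnion (subtree G hG r) := by
  ext u
  simp only [Finset.mem_erase, Finset.mem_biUnion]
  constructor
  · rintro ⟨huv, hu⟩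
    exact exists_mem_treeChildren_of_mem_subtree hu huv
  · rintro ⟨c, hc, hu⟩
    refine ⟨ne_of_mem_subtree_child hc hu, ?_⟩
    obtain ⟨-, -, rfl⟩ := Finset.mem_filter.1 hc
    exact subtree_subset_of_mem_support (treeParent_mem_support_path r c) hu

lemma pairwiseDisjoint_subtree_treeChildren (r v : V) :
    (treeChildren G hG r v : Set V).PairwiseDisjoint (subtree G hG r) := by
  intro c hc c' hc' hne
  refine Finset.disjoint_left.2 fun u hu hu' => hne ?_
  rw [← penultimate_path_of_mem_subtree_child hc hu, penultimate_path_of_mem_subtree_child hc' hu']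

lemma card_subtree_lt_of_mem_treeChildren {v c : V} (hc : c ∈ treeChildren G hG r v) :
    (subtree G hG r c).card < (subtree G hG r v).card := by
  refine (Finset.card_le_card ?_).trans_lt (Finset.card_erase_lt_of_mem (self_mem_subtree r v))
  rw [subtree_erase_eq_biUnion]
  exact Finset.subset_biUnion_of_mem _ hc

lemma IsFlow.eq_sum_subtree {p q φ : V → ℝ} (hφ : IsFlow G hG r p q φ) (v : V) :
    φ v = ∑ u ∈ subtree G hG r v, (p u - q u) := by
  rw [hφ v, Finset.sum_congr rfl fun c hc => hφ.eq_sum_subtree c,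
    ← Finset.sum_biUnion (pairwiseDisjoint_subtree_treeChildren r v), ← subtree_erase_eq_biUnion]
  exact Finset.add_sum_erase _ (fun u => p u - q u) (self_mem_subtree r v)
termination_by (subtree G hG r v).card
decreasing_by exact card_subtree_lt_of_mem_treeChildren hc

end Rooted

section AdjacentRoots

variable {G : SimpleGraph V} {hG : G.IsTree} {a b : V}

lemma subtree_eq_of_adj (hadj : G.Adj a b) {v : V} (ha : v ≠ a) (hb : v ≠ b) :
    subtree G hG a v = subtree G hG b v := by
  ext u
  simp only [mem_subtree]
  exact hG.mem_support_path_iff_of_adj hadj ha hb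

lemma subtree_eq_compl_of_adj (hadj : G.Adj a b) : subtree G hG a b = (subtree G hG b a)ᶜ := by
  ext u
  rw [Finset.mem_compl, mem_subtree, mem_subtree]
  exact hG.mem_support_path_iff_notMem_support_path hadj u

variable {p q φA φB : V → ℝ}

lemma IsFlow.eq_of_adj (hA : IsFlow G hG a p q φA) (hB : IsFlow G hG b p q φB)
    (hadj : G.Adj a b) {v : V} (ha : v ≠ a) (hb : v ≠ b) : φA v = φB v := by
  rw [hA.eq_sum_subtree, hB.eq_sum_subtree, subtree_eq_of_adj hadj ha hb]

lemma IsFlow.eq_neg_of_adj (hA : IsFlow G hG a p q φA) (hB : IsFlow G hG b p q φB)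
    (hadj : G.Adj a b) (hmass : ∑ v, p v = ∑ v, q v) : φA b = -φB a := by
  refine eq_neg_of_add_eq_zero_left ?_
  rw [hA.eq_sum_subtree, hB.eq_sum_subtree, subtree_eq_compl_of_adj hadj,
    Finset.sum_compl_add_sum, Finset.sum_sub_distrib, hmass, sub_self]

end AdjacentRoots

theorem tEMD_adjacent_roots_general (G : SimpleGraph V) (hG : G.IsTree)
    (M : V → V → ℝ) (hMsymm : ∀ a b, M a b = M b a)
    (ρ : ℝ)
    (n₀ n₁ : V) (hadj : G.Adj n₀ n₁) (p q : V → ℝ)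
    (hmass : ∑ v, p v = ∑ v, q v)
    (φA φB : V → ℝ)
    (hA : IsFlow G hG n₀ p q φA) (hB : IsFlow G hG n₁ p q φB) :
    tEMD G hG M ρ n₀ φA = tEMD G hG M ρ n₁ φB := by
  unfold tEMD
  rw [← Finset.sum_erase_add _ _ (Finset.mem_erase.2 ⟨hadj.ne.symm, Finset.mem_univ n₁⟩),
    ← Finset.sum_erase_add _ _ (Finset.mem_erase.2 ⟨hadj.ne, Finset.mem_univ n₀⟩),
    Finset.erase_right_comm]
  congr 1
  · refine Finset.sum_congr rfl fun v hv => ?_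
    obtain ⟨hv₀, hv₁, -⟩ := by simpa only [Finset.mem_erase] using hv
    rw [treeParent_eq_of_adj hadj hv₀ hv₁, hA.eq_of_adj hB hadj hv₀ hv₁]
  · rw [treeParent_of_adj hadj, treeParent_of_adj hadj.symm, hA.eq_neg_of_adj hB hadj hmass,
      abs_neg, hMsymm]

theorem tEMD_adjacent_roots (G : SimpleGraph V) (hG : G.IsTree)
    (M : V → V → ℝ) (hMsymm : ∀ a b, M a b = M b a) (hMnonneg : ∀ a b, 0 ≤ M a b)
    (ρ : ℝ) (hρ : 0 < ρ)
    (n₀ n₁ : V) (hadj : G.Adj n₀ n₁) (p q : V → ℝ)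
    (hmass : ∑ v, p v = ∑ v, q v)
    (φA φB : V → ℝ)
    (hA : IsFlow G hG n₀ p q φA) (hB : IsFlow G hG n₁ p q φB) :
    tEMD G hG M ρ n₀ φA = tEMD G hG M ρ n₁ φB :=
  tEMD_adjacent_roots_general G hG M hMsymm ρ n₀ n₁ hadj p q hmass φA φB hA hB
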